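/- arXiv:1810.06406 — 5 statements merged into one kernel-verified Lean document; each statement's English description precedes it below -/
import Mathlib

section
/- For every n ≥ 1 and b ∈ [0,1], the function G^n_b : [0,1]^n → [0,1], defined inductively by G¹_b(x₀) = Med_b(χ_0(x₀), χ_1(x₀)), G²_b(x₀,x₁) = Med_b(χ_0(x₀∨x₁), χ_1(x₀∧x₁)), and G^{n+1}_b(x₀,...,x_n) = G²_b(G^n_b(x₀,...,x_{n-1}), x_n) for n ≥ 2, satisfies: G^n_b(x) = 0 if x = (0,...,0), G^n_b(x) = 1 if x = (1,...,1), and G^n_b(x) = b otherwise. In particular G^n_b is an n-ary aggregation function. -/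
noncomputable def med (x y b : ℝ) : ℝ := max (min x y) (max (min x b) (min y b))

noncomputable def chi (a x : ℝ) : ℝ := if a ≤ x ∧ x ≠ 0 then 1 else 0

noncomputable def G2 (b x₀ x₁ : ℝ) : ℝ := med (chi 0 (max x₀ x₁)) (chi 1 (min x₀ x₁)) b

/-- `Gn n b` is the `(n+1)`-ary function `G^{n+1}_b` of the paper:
`G¹_b(x₀) = Med_b(χ₀(x₀), χ₁(x₀))` and `G^{n+1}_b(x₀,…,xₙ) = G²_b(G^n_b(x₀,…,x_{n-1}), xₙ)`. -/
noncomputable def Gn : (n : ℕ) → ℝ → (Fin (n+1) → ℝ) → ℝ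
  | 0, b, x => med (chi 0 (x 0)) (chi 1 (x 0)) b
  | n+1, b, x => G2 b (Gn n b (fun i => x i.castSucc)) (x (Fin.last (n+1)))

lemma med00 (b : ℝ) (hb : 0 ≤ b) : med 0 0 b = 0 := by
  simp [med, min_eq_left hb]

lemma med11 (b : ℝ) (hb : b ≤ 1) : med 1 1 b = 1 := by
  simp [med, min_eq_right hb, max_eq_left hb]

lemma med10 (b : ℝ) (hb0 : 0 ≤ b) (hb1 : b ≤ 1) : med 1 0 b = b := by
  unfold med
  rw [min_eq_right hb1, min_eq_left hb0]
  norm_num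
  exact hb0

lemma chi0_pos {t : ℝ} (ht : 0 < t) : chi 0 t = 1 := by
  simp [chi, ht.le, ht.ne']

lemma chi1_lt {t : ℝ} (ht : t < 1) : chi 1 t = 0 := by
  simp [chi]; intro h; linarith

lemma G2_zero (b : ℝ) (hb : 0 ≤ b) : G2 b 0 0 = 0 := by
  simp [G2, chi, med00 b hb]

lemma G2_one (b : ℝ) (hb : b ≤ 1) : G2 b 1 1 = 1 := by
  simp [G2, chi, med11 b hb]

lemma G2_b {b u v : ℝ} (hb0 : 0 ≤ b) (hb1 : b ≤ 1)
    (hu : u ∈ Set.Icc (0:ℝ) 1) (hv : v ∈ Set.Icc (0:ℝ) 1)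
    (h0 : ¬(u = 0 ∧ v = 0)) (h1 : ¬(u = 1 ∧ v = 1)) : G2 b u v = b := by
  have hmax : 0 < max u v := by
    rcases lt_or_eq_of_le hu.1 with h | h
    · exact lt_max_of_lt_left h
    · rcases lt_or_eq_of_le hv.1 with h' | h'
      · exact lt_max_of_lt_right h'
      · exact absurd ⟨h.symm, h'.symm⟩ h0
  have hmin : min u v < 1 := by
    rcases lt_or_eq_of_le hu.2 with h | h
    · exact min_lt_of_left_lt h
    · rcases lt_or_eq_of_le hv.2 with h' | h'
      · exact min_lt_of_right_lt h'
      · exact absurd ⟨h, h'⟩ h1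
  rw [G2, chi0_pos hmax, chi1_lt hmin, med10 b hb0 hb1]

lemma Gn_vals (n : ℕ) (b : ℝ) (hb : b ∈ Set.Icc (0:ℝ) 1) :
    ∀ x : Fin (n+1) → ℝ, (∀ i, x i ∈ Set.Icc (0:ℝ) 1) →
      ((∀ i, x i = 0) → Gn n b x = 0) ∧
      ((∀ i, x i = 1) → Gn n b x = 1) ∧
      (¬(∀ i, x i = 0) → ¬(∀ i, x i = 1) → Gn n b x = b) := by
  induction n with
  | zero =>
    intro x hx
    refine ⟨fun h0 => ?_, fun h1 => ?_, fun h0 h1 => ?_⟩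
    · simp [Gn, chi, h0 0, med00 b hb.1]
    · rw [show Gn 0 b x = med (chi 0 (x 0)) (chi 1 (x 0)) b from rfl, h1 0]
      simp [chi, med11 b hb.2]
    · have h0' : x 0 ≠ 0 := by
        intro h; exact h0 (fun i => by rw [Fin.fin_one_eq_zero i, h])
      have h1' : x 0 ≠ 1 := by
        intro h; exact h1 (fun i => by rw [Fin.fin_one_eq_zero i, h])
      have hp : 0 < x 0 := lt_of_le_of_ne (hx 0).1 (Ne.symm h0')
      have hl : x 0 < 1 := lt_of_le_of_ne (hx 0).2 h1'
      rw [show Gn 0 b x = med (chi 0 (x 0)) (chi 1 (x 0)) b from rfl,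
        chi0_pos hp, chi1_lt hl, med10 b hb.1 hb.2]
  | succ n ih =>
    intro x hx
    set x' : Fin (n+1) → ℝ := fun i => x i.castSucc with hx'def
    have hx' : ∀ i, x' i ∈ Set.Icc (0:ℝ) 1 := fun i => hx _
    obtain ⟨ih0, ih1, ihb⟩ := ih x' hx'
    have hG : Gn (n+1) b x = G2 b (Gn n b x') (x (Fin.last (n+1))) := rfl
    have hg : Gn n b x' ∈ Set.Icc (0:ℝ) 1 := by
      by_cases h0 : ∀ i, x' i = 0
      · rw [ih0 h0]; exact ⟨le_refl 0, zero_le_one⟩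
      · by_cases h1 : ∀ i, x' i = 1
        · rw [ih1 h1]; exact ⟨zero_le_one, le_refl 1⟩
        · rw [ihb h0 h1]; exact hb
    refine ⟨fun h0 => ?_, fun h1 => ?_, fun h0 h1 => ?_⟩
    · rw [hG, ih0 (fun i => h0 _), h0 _, G2_zero b hb.1]
    · rw [hG, ih1 (fun i => h1 _), h1 _, G2_one b hb.2]
    · rw [hG]
      by_cases hA : ∀ i, x' i = 0
      · have hlast : x (Fin.last (n+1)) ≠ 0 := by
          intro h
          apply h0
          intro i
          induction i using Fin.lastCases with
          | last => exact h
          | cast j => exact hA j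
        rw [ih0 hA]
        exact G2_b hb.1 hb.2 ⟨le_refl 0, zero_le_one⟩ (hx _)
          (fun h => hlast h.2) (fun h => one_ne_zero h.1.symm)
      · by_cases hB : ∀ i, x' i = 1
        · have hlast : x (Fin.last (n+1)) ≠ 1 := by
            intro h
            apply h1
            intro i
            induction i using Fin.lastCases with
            | last => exact h
            | cast j => exact hB j
          rw [ih1 hB]
          exact G2_b hb.1 hb.2 ⟨zero_le_one, le_refl 1⟩ (hx _)
            (fun h => one_ne_zero h.1) (fun h => hlast h.2)
        · rw [ihb hA hB]
          by_cases hc0 : b = 0 ∧ x (Fin.last (n+1)) = 0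
          · rw [hc0.1, hc0.2]; exact G2_zero 0 le_rfl
          · by_cases hc1 : b = 1 ∧ x (Fin.last (n+1)) = 1
            · rw [hc1.1, hc1.2]; exact G2_one 1 le_rfl
            · exact G2_b hb.1 hb.2 hb (hx _) hc0 hc1

theorem Gn_values_and_aggregation (n : ℕ) (b : ℝ) (hb : b ∈ Set.Icc (0:ℝ) 1) :
    (∀ x : Fin (n+1) → ℝ, (∀ i, x i ∈ Set.Icc (0:ℝ) 1) →
      ((∀ i, x i = 0) → Gn n b x = 0) ∧
      ((∀ i, x i = 1) → Gn n b x = 1) ∧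
      (¬(∀ i, x i = 0) → ¬(∀ i, x i = 1) → Gn n b x = b)) ∧
    (∀ x y : Fin (n+1) → ℝ, (∀ i, x i ∈ Set.Icc (0:ℝ) 1) → (∀ i, y i ∈ Set.Icc (0:ℝ) 1) →
      x ≤ y → Gn n b x ≤ Gn n b y) ∧
    (∀ x : Fin (n+1) → ℝ, (∀ i, x i ∈ Set.Icc (0:ℝ) 1) → Gn n b x ∈ Set.Icc (0:ℝ) 1) := by
  have range : ∀ x : Fin (n+1) → ℝ, (∀ i, x i ∈ Set.Icc (0:ℝ) 1) →
      Gn n b x ∈ Set.Icc (0:ℝ) 1 := by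
    intro x hx
    obtain ⟨h0, h1, hB⟩ := Gn_vals n b hb x hx
    by_cases c0 : ∀ i, x i = 0
    · rw [h0 c0]; exact ⟨le_refl 0, zero_le_one⟩
    · by_cases c1 : ∀ i, x i = 1
      · rw [h1 c1]; exact ⟨zero_le_one, le_refl 1⟩
      · rw [hB c0 c1]; exact hb
  refine ⟨Gn_vals n b hb, ?_, range⟩
  intro x y hx hy hxy
  obtain ⟨hx0, hx1, hxb⟩ := Gn_vals n b hb x hx
  obtain ⟨hy0, hy1, hyb⟩ := Gn_vals n b hb y hy
  by_cases c0 : ∀ i, x i = 0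
  · rw [hx0 c0]; exact (range y hy).1
  · by_cases c1 : ∀ i, y i = 1
    · rw [hy1 c1]; exact (range x hx).2
    · have cy0 : ¬∀ i, y i = 0 := by
        intro h
        apply c0
        intro i
        exact le_antisymm (by rw [← h i]; exact hxy i) (hx i).1
      have cx1 : ¬∀ i, x i = 1 := by
        intro h
        apply c1
        intro i
        exact le_antisymm (hy i).2 (by rw [← h i]; exact hxy i)
      rw [hxb c0 cx1, hyb cy0 c1]
end

section
/- Let f : [0,1]^n → [0,1] be an aggregation function and let a ∈ [0,1]^n with a ≠ (0,...,0) and a ≠ (1,...,1). Define h_a^f : [0,1]^n → [0,1] by h_a^f(x) = min(G^n_{f(a)}(x), min_{i : a_i ≠ 0} χ_{a_i}(x_i)). Then h_a^f(x) = 1 if x = (1,...,1), h_a^f(x) = f(a) if x ≥ a (componentwise) and x ≠ (1,...,1), and h_a^f(x) = 0 if x ≱ a. In particular h_a^f is an aggregation function. -/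
/-- The `n`-ary constant-like aggregation function `G^n_c`. -/
noncomputable def Gval (n : ℕ) (c : ℝ) (x : Fin n → ℝ) : ℝ :=
  if ∀ i, x i = 0 then 0 else if ∀ i, x i = 1 then 1 else c

/-- `h_a^f(x) = G^n_{f(a)}(x) ∧ ⋀_{i : aᵢ ≠ 0} χ_{aᵢ}(xᵢ)`. -/
noncomputable def hfun (n : ℕ) (c : ℝ) (a x : Fin n → ℝ) : ℝ :=
  min (Gval n c x) (sInf {v : ℝ | ∃ i : Fin n, a i ≠ 0 ∧ v = chi (a i) (x i)})

theorem hfun_values_and_aggregation (n : ℕ) (f : (Fin n → ℝ) → ℝ)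
    (hmono : ∀ x y : Fin n → ℝ, (∀ i, x i ∈ Set.Icc (0:ℝ) 1) → (∀ i, y i ∈ Set.Icc (0:ℝ) 1) →
      x ≤ y → f x ≤ f y)
    (hmap : ∀ x : Fin n → ℝ, (∀ i, x i ∈ Set.Icc (0:ℝ) 1) → f x ∈ Set.Icc (0:ℝ) 1)
    (hf0 : f 0 = 0) (hf1 : f 1 = 1)
    (a : Fin n → ℝ) (ha : ∀ i, a i ∈ Set.Icc (0:ℝ) 1) (ha0 : a ≠ 0) (ha1 : a ≠ 1) :
    (∀ x : Fin n → ℝ, (∀ i, x i ∈ Set.Icc (0:ℝ) 1) →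
      (x = 1 → hfun n (f a) a x = 1) ∧
      (a ≤ x → x ≠ 1 → hfun n (f a) a x = f a) ∧
      (¬ a ≤ x → hfun n (f a) a x = 0)) ∧
    (∀ x y : Fin n → ℝ, (∀ i, x i ∈ Set.Icc (0:ℝ) 1) → (∀ i, y i ∈ Set.Icc (0:ℝ) 1) →
      x ≤ y → hfun n (f a) a x ≤ hfun n (f a) a y) ∧
    hfun n (f a) a 0 = 0 ∧ hfun n (f a) a 1 = 1 := by
  classical
  have hfa0 : (0:ℝ) ≤ f a := (hmap a ha).1
  have hfa1 : f a ≤ 1 := (hmap a ha).2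
  obtain ⟨i0, hi0⟩ : ∃ i, a i ≠ 0 := by
    by_contra h; push_neg at h; exact ha0 (funext fun i => h i)
  have hai0pos : 0 < a i0 := lt_of_le_of_ne (ha i0).1 (Ne.symm hi0)
  have hGnonneg : ∀ x : Fin n → ℝ, (0:ℝ) ≤ Gval n (f a) x := by
    intro x; unfold Gval
    split
    · exact le_refl 0
    · split
      · exact zero_le_one
      · exact hfa0
  -- the key value lemma
  have key : ∀ x : Fin n → ℝ, (∀ i, x i ∈ Set.Icc (0:ℝ) 1) →
      (x = 1 → hfun n (f a) a x = 1) ∧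
      (a ≤ x → x ≠ 1 → hfun n (f a) a x = f a) ∧
      (¬ a ≤ x → hfun n (f a) a x = 0) := by
    intro x hx
    set S := {v : ℝ | ∃ i : Fin n, a i ≠ 0 ∧ v = chi (a i) (x i)} with hSdef
    have hSne : S.Nonempty := ⟨chi (a i0) (x i0), i0, hi0, rfl⟩
    have hSbdd : ∀ v ∈ S, (0:ℝ) ≤ v := by
      rintro v ⟨i, -, rfl⟩
      unfold chi; split
      · exact zero_le_one
      · exact le_refl 0
    -- if all relevant chi's are 1
    have hInf_one : (∀ i, a i ≠ 0 → chi (a i) (x i) = 1) → sInf S = 1 := by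
      intro h
      have hSeq : S = {1} := by
        apply Set.eq_singleton_iff_nonempty_unique_mem.mpr
        refine ⟨hSne, ?_⟩
        rintro v ⟨i, hi, rfl⟩
        exact h i hi
      rw [hSeq, csInf_singleton]
    have hInf_zero : (0:ℝ) ∈ S → sInf S = 0 := by
      intro h0
      exact le_antisymm (csInf_le ⟨0, hSbdd⟩ h0) (le_csInf hSne hSbdd)
    refine ⟨?_, ?_, ?_⟩
    · rintro rfl
      have hG : Gval n (f a) (1 : Fin n → ℝ) = 1 := by
        unfold Gval
        rw [if_neg, if_pos]
        · intro i; rfl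
        · intro h
          have := h i0
          simp only [Pi.one_apply] at this
          exact one_ne_zero this
      have hI : sInf S = 1 := by
        apply hInf_one
        intro i hi
        unfold chi
        rw [if_pos]
        exact ⟨(ha i).2, one_ne_zero⟩
      unfold hfun
      rw [← hSdef, hG, hI, min_self]
    · intro hax hx1
      have hxi0pos : 0 < x i0 := lt_of_lt_of_le hai0pos (hax i0)
      have hG : Gval n (f a) x = f a := by
        unfold Gval
        rw [if_neg, if_neg]
        · intro h
          exact hx1 (funext fun i => h i)
        · intro h
          exact absurd (h i0) (ne_of_gt hxi0pos)
      have hI : sInf S = 1 := by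
        apply hInf_one
        intro i hi
        have haipos : 0 < a i := lt_of_le_of_ne (ha i).1 (Ne.symm hi)
        unfold chi
        rw [if_pos]
        exact ⟨hax i, ne_of_gt (lt_of_lt_of_le haipos (hax i))⟩
      unfold hfun
      rw [← hSdef, hG, hI, min_eq_left hfa1]
    · intro hax
      obtain ⟨j, hj⟩ : ∃ j, ¬ a j ≤ x j := by
        by_contra h; push_neg at h; exact hax (fun i => h i)
      have haj : a j ≠ 0 := by
        intro h
        exact hj (h ▸ (hx j).1)
      have hchij : chi (a j) (x j) = 0 := by
        unfold chi
        rw [if_neg]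
        intro h
        exact hj h.1
      have h0S : (0:ℝ) ∈ S := ⟨j, haj, hchij.symm⟩
      unfold hfun
      rw [← hSdef, hInf_zero h0S, min_eq_right (hGnonneg x)]
  have hcube0 : ∀ i, (0 : Fin n → ℝ) i ∈ Set.Icc (0:ℝ) 1 := by
    intro i; exact ⟨le_refl 0, zero_le_one⟩
  have hcube1 : ∀ i, (1 : Fin n → ℝ) i ∈ Set.Icc (0:ℝ) 1 := by
    intro i; exact ⟨zero_le_one, le_refl 1⟩
  refine ⟨key, ?_, ?_, ?_⟩
  · intro x y hx hy hxy
    by_cases hax : a ≤ x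
    · have hay : a ≤ y := le_trans hax hxy
      by_cases hx1 : x = 1
      · have hy1 : y = 1 := by
          apply le_antisymm
          · intro i; exact (hy i).2
          · exact hx1 ▸ hxy
        rw [(key x hx).1 hx1, (key y hy).1 hy1]
      · rw [(key x hx).2.1 hax hx1]
        by_cases hy1 : y = 1
        · rw [(key y hy).1 hy1]; exact hfa1
        · rw [(key y hy).2.1 hay hy1]
    · rw [(key x hx).2.2 hax]
      by_cases hay : a ≤ y
      · by_cases hy1 : y = 1
        · rw [(key y hy).1 hy1]; exact zero_le_one
        · rw [(key y hy).2.1 hay hy1]; exact hfa0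
      · rw [(key y hy).2.2 hay]
  · apply (key 0 hcube0).2.2
    intro h
    have := h i0
    simp only [Pi.zero_apply] at this
    exact absurd (le_antisymm this (ha i0).1) hi0
  · exact (key 1 hcube1).1 rfl
end

section
/- Let f : [0,1]^n → [0,1] be an aggregation function. Then for every x ∈ [0,1]^n, f(x) equals the supremum over all a ∈ [0,1]^n with (0,...,0) ≠ a ≠ (1,...,1) of h_a^f(x), where h_a^f(x) = 1 if x = (1,...,1), h_a^f(x) = f(a) if x ≥ a and x ≠ (1,...,1), and h_a^f(x) = 0 if x ≱ a. -/
open Classical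

theorem agg_eq_sSup_hfun (n : ℕ) (hn : 0 < n) (f : (Fin n → ℝ) → ℝ)
    (hmono : ∀ x y : Fin n → ℝ, (∀ i, x i ∈ Set.Icc (0:ℝ) 1) → (∀ i, y i ∈ Set.Icc (0:ℝ) 1) →
      x ≤ y → f x ≤ f y)
    (hmap : ∀ x : Fin n → ℝ, (∀ i, x i ∈ Set.Icc (0:ℝ) 1) → f x ∈ Set.Icc (0:ℝ) 1)
    (hf0 : f 0 = 0) (hf1 : f 1 = 1) :
    ∀ x : Fin n → ℝ, (∀ i, x i ∈ Set.Icc (0:ℝ) 1) →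
      f x = sSup {v : ℝ | ∃ a : Fin n → ℝ, (∀ i, a i ∈ Set.Icc (0:ℝ) 1) ∧ a ≠ 0 ∧ a ≠ 1 ∧
        v = (if x = 1 then (1:ℝ) else if a ≤ x then f a else 0)} := by
  intro x hx
  set i0 : Fin n := ⟨0, hn⟩
  set a0 : Fin n → ℝ := fun _ => 1/2 with ha0def
  have ha0mem : ∀ i, a0 i ∈ Set.Icc (0:ℝ) 1 := by
    intro i; constructor <;> norm_num [ha0def]
  have ha0ne0 : a0 ≠ 0 := by
    intro h; have := congrFun h i0; norm_num [ha0def] at this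
  have ha0ne1 : a0 ≠ 1 := by
    intro h; have := congrFun h i0; norm_num [ha0def] at this
  by_cases hx1 : x = 1
  · have hS : {v : ℝ | ∃ a : Fin n → ℝ, (∀ i, a i ∈ Set.Icc (0:ℝ) 1) ∧ a ≠ 0 ∧ a ≠ 1 ∧
        v = (if x = 1 then (1:ℝ) else if a ≤ x then f a else 0)} = {1} := by
      ext v
      simp only [Set.mem_setOf_eq, Set.mem_singleton_iff, if_pos hx1]
      constructor
      · rintro ⟨a, _, _, _, rfl⟩; rfl
      · rintro rfl; exact ⟨a0, ha0mem, ha0ne0, ha0ne1, rfl⟩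
    rw [hS, csSup_singleton, hx1, hf1]
  · by_cases hx0 : x = 0
    · have hS : {v : ℝ | ∃ a : Fin n → ℝ, (∀ i, a i ∈ Set.Icc (0:ℝ) 1) ∧ a ≠ 0 ∧ a ≠ 1 ∧
          v = (if x = 1 then (1:ℝ) else if a ≤ x then f a else 0)} = {0} := by
        ext v
        simp only [Set.mem_setOf_eq, Set.mem_singleton_iff, if_neg hx1]
        constructor
        · rintro ⟨a, ha, hane0, _, rfl⟩
          rw [if_neg]
          intro hax
          apply hane0
          funext i
          exact le_antisymm (by simpa [hx0] using hax i) (ha i).1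
        · rintro rfl
          refine ⟨a0, ha0mem, ha0ne0, ha0ne1, ?_⟩
          rw [if_neg]
          intro hax
          have := hax i0
          simp [ha0def, hx0] at this
          linarith
      rw [hS, csSup_singleton, hx0, hf0]
    · have hub : ∀ v ∈ {v : ℝ | ∃ a : Fin n → ℝ, (∀ i, a i ∈ Set.Icc (0:ℝ) 1) ∧ a ≠ 0 ∧ a ≠ 1 ∧
          v = (if x = 1 then (1:ℝ) else if a ≤ x then f a else 0)}, v ≤ f x := by
        rintro v ⟨a, ha, _, _, rfl⟩
        rw [if_neg hx1]
        split
        · exact hmono a x ha hx ‹a ≤ x›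
        · exact (hmap x hx).1
      have hmem : f x ∈ {v : ℝ | ∃ a : Fin n → ℝ, (∀ i, a i ∈ Set.Icc (0:ℝ) 1) ∧ a ≠ 0 ∧ a ≠ 1 ∧
          v = (if x = 1 then (1:ℝ) else if a ≤ x then f a else 0)} :=
        ⟨x, hx, hx0, hx1, by rw [if_neg hx1, if_pos le_rfl]⟩
      exact le_antisymm (le_csSup ⟨f x, hub⟩ hmem) (csSup_le ⟨f x, hmem⟩ hub)
end

section
/- Let f : [0,1] → [0,1] be a unary aggregation function and D(f) = {c ∈ (0,1) : sup_{x<c} f(x) < f(c)}. Then for every x ∈ [0,1], f(x) = sup_{q ∈ ℚ∩(0,1)} h^f_q(x) ∨ sup_{c ∈ D(f)} h^f_c(x), where for a ∈ (0,1), h^f_a(x) = 1 if x = 1, h^f_a(x) = f(a) if a ≤ x < 1, and h^f_a(x) = 0 if x < a. -/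
open Classical

theorem unary_agg_representation (f : ℝ → ℝ)
    (hmono : MonotoneOn f (Set.Icc 0 1))
    (hmap : Set.MapsTo f (Set.Icc 0 1) (Set.Icc 0 1))
    (hf0 : f 0 = 0) (hf1 : f 1 = 1) :
    ∀ x ∈ Set.Icc (0:ℝ) 1,
      f x = max
        (sSup {v : ℝ | ∃ q : ℚ, (q:ℝ) ∈ Set.Ioo (0:ℝ) 1 ∧
          v = (if x = 1 then (1:ℝ) else if (q:ℝ) ≤ x then f (q:ℝ) else 0)})
        (sSup {v : ℝ | ∃ c : ℝ, (c ∈ Set.Ioo (0:ℝ) 1 ∧ sSup (f '' Set.Ico 0 c) < f c) ∧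
          v = (if x = 1 then (1:ℝ) else if c ≤ x then f c else 0)}) := by
  intro x hx
  obtain ⟨hx0, hx1⟩ := hx
  have hfx0 : 0 ≤ f x := (hmap ⟨hx0, hx1⟩).1
  by_cases hx1' : x = 1
  · subst hx1'
    have hA : {v : ℝ | ∃ q : ℚ, (q:ℝ) ∈ Set.Ioo (0:ℝ) 1 ∧
        v = (if (1:ℝ) = 1 then (1:ℝ) else if (q:ℝ) ≤ 1 then f (q:ℝ) else 0)} = {1} := by
      ext v
      simp only [Set.mem_setOf_eq, if_pos rfl, Set.mem_singleton_iff]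
      constructor
      · rintro ⟨q, _, rfl⟩; rfl
      · rintro rfl
        exact ⟨(1:ℚ)/2, by constructor <;> norm_num, rfl⟩
    rw [hA, csSup_singleton]
    have hB : sSup {v : ℝ | ∃ c : ℝ, (c ∈ Set.Ioo (0:ℝ) 1 ∧ sSup (f '' Set.Ico 0 c) < f c) ∧
        v = (if (1:ℝ) = 1 then (1:ℝ) else if c ≤ 1 then f c else 0)} ≤ 1 := by
      apply Real.sSup_le
      · rintro v ⟨c, _, rfl⟩
        simp
      · norm_num
    rw [hf1, max_eq_left hB]
  · have hxlt : x < 1 := lt_of_le_of_ne hx1 hx1'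
    simp only [if_neg hx1']
    set A := {v : ℝ | ∃ q : ℚ, (q:ℝ) ∈ Set.Ioo (0:ℝ) 1 ∧
        v = (if (q:ℝ) ≤ x then f (q:ℝ) else 0)} with hAdef
    set B := {v : ℝ | ∃ c : ℝ, (c ∈ Set.Ioo (0:ℝ) 1 ∧ sSup (f '' Set.Ico 0 c) < f c) ∧
        v = (if c ≤ x then f c else 0)} with hBdef
    have hAle : ∀ v ∈ A, v ≤ f x := by
      rintro v ⟨q, ⟨hq0, hq1⟩, rfl⟩
      split_ifs with h
      · exact hmono ⟨hq0.le, hq1.le⟩ ⟨hx0, hx1⟩ h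
      · exact hfx0
    have hBle : ∀ v ∈ B, v ≤ f x := by
      rintro v ⟨c, ⟨⟨hc0, hc1⟩, _⟩, rfl⟩
      split_ifs with h
      · exact hmono ⟨hc0.le, hc1.le⟩ ⟨hx0, hx1⟩ h
      · exact hfx0
    have hAbdd : BddAbove A := ⟨f x, fun v hv => hAle v hv⟩
    have hBbdd : BddAbove B := ⟨f x, fun v hv => hBle v hv⟩
    have hA0 : (0:ℝ) ≤ sSup A := by
      have hmem : (if (((1:ℚ)/2:ℚ):ℝ) ≤ x then f (((1:ℚ)/2:ℚ):ℝ) else 0) ∈ A :=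
        ⟨(1:ℚ)/2, ⟨by norm_num, by norm_num⟩, rfl⟩
      refine le_trans ?_ (le_csSup hAbdd hmem)
      split_ifs with h
      · exact (hmap ⟨by norm_num, by norm_num⟩).1
      · exact le_rfl
    have hupper : max (sSup A) (sSup B) ≤ f x :=
      max_le (Real.sSup_le hAle hfx0) (Real.sSup_le hBle hfx0)
    refine le_antisymm ?_ hupper
    by_cases hx0' : x = 0
    · subst hx0'
      rw [hf0]
      exact le_trans hA0 (le_max_left _ _)
    · have hx0'' : 0 < x := lt_of_le_of_ne hx0 (Ne.symm hx0')
      rcases lt_or_ge (sSup (f '' Set.Ico 0 x)) (f x) with hD | hs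
      · have hfxB : f x ∈ B := ⟨x, ⟨⟨hx0'', hxlt⟩, hD⟩, by rw [if_pos le_rfl]⟩
        exact le_trans (le_csSup hBbdd hfxB) (le_max_right _ _)
      · refine le_trans hs (le_trans ?_ (le_max_left _ _))
        apply Real.sSup_le _ hA0
        rintro v ⟨y, ⟨hy0, hyx⟩, rfl⟩
        rcases eq_or_lt_of_le hy0 with rfl | hy0'
        · rw [hf0]; exact hA0
        · obtain ⟨q, hq1, hq2⟩ := exists_rat_btwn hyx
          have hq0 : (0:ℝ) < (q:ℝ) := lt_trans hy0' hq1
          have hqx : (q:ℝ) < 1 := lt_trans hq2 hxlt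
          have hmemA : f (q:ℝ) ∈ A := ⟨q, ⟨hq0, hqx⟩, by rw [if_pos hq2.le]⟩
          exact le_trans (hmono ⟨hy0, (le_trans hq1.le hqx.le)⟩ ⟨hq0.le, hqx.le⟩ hq1.le)
            (le_csSup hAbdd hmemA)
end

section
/- Let b ∈ [0,1]. For all x, y, z ∈ [0,1], Med(Med(x,y,b), z, b) = Med(x, Med(y,z,b), b); i.e., the binary operation Med_b(x,y) = Med(x,y,b) is associative. -/
set_option maxHeartbeats 4000000 in
theorem med_assoc (b : ℝ) (hb : b ∈ Set.Icc (0:ℝ) 1)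
    (x y z : ℝ) (hx : x ∈ Set.Icc (0:ℝ) 1) (hy : y ∈ Set.Icc (0:ℝ) 1)
    (hz : z ∈ Set.Icc (0:ℝ) 1) :
    med (med x y b) z b = med x (med y z b) b := by
  unfold med
  apply le_antisymm <;>
    simp [max_le_iff, le_max_iff, min_le_iff, le_min_iff] <;>
    rcases le_total x y with h1 | h1 <;> rcases le_total y z with h2 | h2 <;>
    rcases le_total x z with h3 | h3 <;> rcases le_total x b with h4 | h4 <;>
    rcases le_total y b with h5 | h5 <;> rcases le_total z b with h6 | h6 <;>
    try simp_all
  all_goals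
    have hxz : x ≤ z := by linarith
    have hzx : z ≤ x := by linarith
    have hxy : x ≤ y := by linarith
    have hyx : y ≤ x := by linarith
    have hyz : y ≤ z := by linarith
    have hzy : z ≤ y := by linarith
    tauto
end
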